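/- Fix v > 1 and an integer k ≥ 0. Under the Beta-Binomial model-size prior with Beta(1, p^v) hyperprior, i.e. P_p(k) = C(p,k) B(1+k, p^v + p - k)/B(1, p^v), the quantity p^{v-1} · P_p(k+1)/P_p(k) converges to 1 as p → ∞; equivalently, P_p(k+1)/P_p(k) is asymptotic to p^{1-v}. -/

import Mathlib

/-!
The Gamma recurrence `Γ(s+1) = s Γ(s)` and the binomial recurrence
`C(p,k+1) (k+1) = C(p,k) (p-k)` make the factors `k+1` cancel, so that
`P_p(k+1) / P_p(k) = (p-k) / (b+p-k-1)` exactly. With `b = p^v` this is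
`p^{1-v} (1 - k/p) / (1 + p^{1-v} - (k+1) p^{-v})`, and the correction factor tends to `1`.
-/

open Filter

/-- The Beta function B(a,b) = Γ(a)Γ(b)/Γ(a+b). -/
noncomputable def betaFn (a b : ℝ) : ℝ := Real.Gamma a * Real.Gamma b / Real.Gamma (a + b)

open Topology

noncomputable def betaBinomialPrior (b : ℝ) (p k : ℕ) : ℝ :=
  p.choose k * betaFn (1 + k) (b + p - k) / betaFn 1 b

lemma betaFn_pos {a b : ℝ} (ha : 0 < a) (hb : 0 < b) : 0 < betaFn a b :=
  div_pos (mul_pos (Real.Gamma_pos_of_pos ha) (Real.Gamma_pos_of_pos hb))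
    (Real.Gamma_pos_of_pos (add_pos ha hb))

lemma betaFn_add_one_left_mul {a b : ℝ} (ha : a ≠ 0) (hb : b ≠ 0) :
    b * betaFn (a + 1) b = a * betaFn a (b + 1) := by
  unfold betaFn
  rw [Real.Gamma_add_one ha, Real.Gamma_add_one hb, show a + 1 + b = a + (b + 1) by ring]
  ring

lemma cast_choose_succ_mul (n k : ℕ) :
    (n.choose (k + 1) : ℝ) * (k + 1) = n.choose k * (n - k) := by
  rcases le_or_gt k n with hkn | hnk
  · have h := congrArg (Nat.cast : ℕ → ℝ) (Nat.choose_succ_right_eq n k)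
    push_cast [Nat.cast_sub hkn] at h
    exact h
  · simp [Nat.choose_eq_zero_of_lt hnk, Nat.choose_eq_zero_of_lt (hnk.trans k.lt_succ_self)]

lemma betaBinomialPrior_pos {b : ℝ} (hb : 0 < b) {p k : ℕ} (hk : k ≤ p) :
    0 < betaBinomialPrior b p k := by
  have hkp : (k : ℝ) ≤ p := by exact_mod_cast hk
  unfold betaBinomialPrior
  have hchoose := Nat.choose_pos hk
  have hbeta := betaFn_pos (a := 1 + k) (b := b + p - k) (by positivity) (by linarith)
  have hbeta₀ := betaFn_pos one_pos hb
  positivity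

lemma betaBinomialPrior_succ {b : ℝ} {p k : ℕ} (hY : b + p - (k + 1) ≠ 0) :
    betaBinomialPrior b p (k + 1) = (p - k) / (b + p - (k + 1)) * betaBinomialPrior b p k := by
  have hchoose := cast_choose_succ_mul p k
  have hrec := betaFn_add_one_left_mul (a := 1 + k) (b := b + p - (k + 1)) (by positivity) hY
  rw [show b + p - (k + 1) + 1 = b + p - k by ring, show 1 + (k : ℝ) + 1 = 1 + (k + 1) by ring]
    at hrec
  unfold betaBinomialPrior
  push_cast
  field_simp
  linear_combination ((p.choose (k + 1) : ℝ) * hrec + betaFn (1 + k) (b + p - k) * hchoose) /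
    betaFn 1 b

lemma betaBinomialPrior_succ_div {b : ℝ} (hb : 0 < b) {p k : ℕ} (hk : k < p) :
    betaBinomialPrior b p (k + 1) / betaBinomialPrior b p k = (p - k) / (b + p - (k + 1)) := by
  have hkp : (k : ℝ) + 1 ≤ p := by exact_mod_cast hk
  rw [betaBinomialPrior_succ (by linarith),
    mul_div_cancel_right₀ _ (betaBinomialPrior_pos hb hk.le).ne']

theorem tendsto_rpow_sub_one_mul_sub_div_rpow_add_sub {v : ℝ} (hv : 1 < v) (c d : ℝ) :
    Tendsto (fun x : ℝ => x ^ (v - 1) * ((x - c) / (x ^ v + x - d))) atTop (𝓝 1) := by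
  have hinv : Tendsto (fun x : ℝ => x⁻¹) atTop (𝓝 0) := tendsto_inv_atTop_zero
  have hyinv : Tendsto (fun x : ℝ => (x ^ (v - 1))⁻¹) atTop (𝓝 0) :=
    (tendsto_rpow_atTop (by linarith)).inv_tendsto_atTop
  -- the function divided through by `x ^ v = x ^ (v - 1) * x`
  have hlim : Tendsto (fun x : ℝ => (1 - c * x⁻¹) /
      (1 + (x ^ (v - 1))⁻¹ - d * ((x ^ (v - 1))⁻¹ * x⁻¹))) atTop (𝓝 1) := by
    have hnum : Tendsto (fun x : ℝ => 1 - c * x⁻¹) atTop (𝓝 1) := by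
      simpa using tendsto_const_nhds.sub (hinv.const_mul c)
    have hden : Tendsto (fun x : ℝ => 1 + (x ^ (v - 1))⁻¹ - d * ((x ^ (v - 1))⁻¹ * x⁻¹))
        atTop (𝓝 1) := by
      simpa using (tendsto_const_nhds.add hyinv).sub ((hyinv.mul hinv).const_mul d)
    have h := hnum.div hden one_ne_zero
    rwa [div_one] at h
  refine hlim.congr' ?_
  filter_upwards [eventually_gt_atTop (max 0 d)] with x hx
  have hx0 : 0 < x := (le_max_left _ _).trans_lt hx
  have hxd : d < x := (le_max_right _ _).trans_lt hx
  have hy : 0 < x ^ (v - 1) := Real.rpow_pos_of_pos hx0 _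
  have hden : 0 < x ^ (v - 1) * x + x - d := by nlinarith
  rw [show x ^ v = x ^ (v - 1) * x by rw [Real.rpow_sub_one hx0.ne', div_mul_cancel₀ _ hx0.ne']]
  field_simp

/-- Under a Beta(1, p^v) hyperprior with v > 1, the model-size ratio is asymptotic to p^{1-v}. -/
theorem stmt8 (v : ℝ) (hv : 1 < v) (k : ℕ) :
    Tendsto (fun p : ℕ =>
        (p : ℝ) ^ (v - 1) *
          (((p.choose (k + 1) : ℝ) *
              betaFn (1 + ((k : ℝ) + 1)) ((p : ℝ) ^ v + (p : ℝ) - ((k : ℝ) + 1)) /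
              betaFn 1 ((p : ℝ) ^ v)) /
            ((p.choose k : ℝ) * betaFn (1 + (k : ℝ)) ((p : ℝ) ^ v + (p : ℝ) - (k : ℝ)) /
              betaFn 1 ((p : ℝ) ^ v))))
      atTop (nhds 1) := by
  refine ((tendsto_rpow_sub_one_mul_sub_div_rpow_add_sub hv k (k + 1)).comp
    tendsto_natCast_atTop_atTop).congr' ?_
  filter_upwards [eventually_gt_atTop k] with p hp
  have hb : 0 < (p : ℝ) ^ v := Real.rpow_pos_of_pos (Nat.cast_pos.mpr (Nat.zero_lt_of_lt hp)) v
  have h := betaBinomialPrior_succ_div hb hp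
  simp only [betaBinomialPrior, Nat.cast_succ] at h
  rw [Function.comp_apply, h]
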